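/- Suppose Q* : S × A → ℝ and g* ∈ ℝ satisfy 𝒯 Q* = Q* + g* • 1, and let Q : ℕ → (S × A → ℝ) be the exact Robust Halpern Iteration: Q (k+1) = (2/(k+3)) • Q 0 + ((k+1)/(k+3)) • 𝒯 (Q k) for all k ≥ 0 (i.e., with Halpern weights β_k = k/(k+2)). Then Sp(𝒯 (Q k) − Q k) ≤ 8 * Sp(Q 0 − Q*) / (k+2) for all k, and in particular Sp(𝒯 (Q k) − Q k) → 0 as k → ∞. -/
import Mathlib


open Finset

noncomputable def supNorm {X : Type*} [Fintype X] [Nonempty X] (v : X → ℝ) : ℝ :=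
  Finset.univ.sup' Finset.univ_nonempty fun x => |v x|

noncomputable def spanSN {X : Type*} [Fintype X] [Nonempty X] (v : X → ℝ) : ℝ :=
  (Finset.univ.sup' Finset.univ_nonempty v) - (Finset.univ.inf' Finset.univ_nonempty v)

noncomputable def sigma' {S A : Type*} [Fintype S] (P : S → A → Set (S → ℝ))
    (h : S → ℝ) (s : S) (a : A) : ℝ :=
  sInf {x : ℝ | ∃ p ∈ P s a, x = ∑ s', p s' * h s'}

noncomputable def bellman {S A : Type*} [Fintype S] [Fintype A] [Nonempty A]
    (P : S → A → Set (S → ℝ)) (r : S → A → ℝ) (Q : S × A → ℝ) : S × A → ℝ :=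
  fun sa => r sa.1 sa.2 +
    sigma' P (fun s' => Finset.univ.sup' Finset.univ_nonempty fun a' => Q (s', a')) sa.1 sa.2

section auxspan
variable {X : Type*} [Fintype X] [Nonempty X]

lemma le_sup'_univ (v : X → ℝ) (x : X) :
    v x ≤ Finset.univ.sup' Finset.univ_nonempty v :=
  Finset.le_sup' v (Finset.mem_univ x)

lemma inf'_univ_le (v : X → ℝ) (x : X) :
    Finset.univ.inf' Finset.univ_nonempty v ≤ v x :=
  Finset.inf'_le v (Finset.mem_univ x)

lemma spanSN_le_of_bounds {v : X → ℝ} {M m : ℝ} (hM : ∀ x, v x ≤ M) (hm : ∀ x, m ≤ v x) :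
    spanSN v ≤ M - m := by
  have h1 : Finset.univ.sup' Finset.univ_nonempty v ≤ M :=
    Finset.sup'_le _ _ fun x _ => hM x
  have h2 : m ≤ Finset.univ.inf' Finset.univ_nonempty v :=
    Finset.le_inf' _ _ fun x _ => hm x
  unfold spanSN; linarith

lemma spanSN_nonneg (v : X → ℝ) : 0 ≤ spanSN v := by
  obtain ⟨x⟩ := ‹Nonempty X›
  have h1 := le_sup'_univ v x
  have h2 := inf'_univ_le v x
  unfold spanSN; linarith

lemma spanSN_neg (v : X → ℝ) : spanSN (fun x => - v x) = spanSN v := by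
  have h1 : Finset.univ.sup' Finset.univ_nonempty (fun x => -v x)
      = - Finset.univ.inf' Finset.univ_nonempty v := by
    apply le_antisymm
    · exact Finset.sup'_le _ _ fun x _ => neg_le_neg (inf'_univ_le v x)
    · rw [neg_le]
      exact Finset.le_inf' _ _ fun x _ => by
        have := le_sup'_univ (fun x => -v x) x; linarith
  have h2 : Finset.univ.inf' Finset.univ_nonempty (fun x => -v x)
      = - Finset.univ.sup' Finset.univ_nonempty v := by
    apply le_antisymm
    · rw [le_neg]
      exact Finset.sup'_le _ _ fun x _ => by
        have := inf'_univ_le (fun x => -v x) x; linarith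
    · exact Finset.le_inf' _ _ fun x _ => neg_le_neg (le_sup'_univ v x)
  unfold spanSN; rw [h1, h2]; ring

lemma spanSN_combo {a b c : ℝ} (ha : 0 ≤ a) (hb : 0 ≤ b) (u v : X → ℝ) :
    spanSN (fun x => a * u x + b * v x + c) ≤ a * spanSN u + b * spanSN v := by
  have h := spanSN_le_of_bounds
    (v := fun x => a * u x + b * v x + c)
    (M := a * Finset.univ.sup' Finset.univ_nonempty u
        + b * Finset.univ.sup' Finset.univ_nonempty v + c)
    (m := a * Finset.univ.inf' Finset.univ_nonempty u
        + b * Finset.univ.inf' Finset.univ_nonempty v + c)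
    (fun x => by
      have h1 := le_sup'_univ u x; have h2 := le_sup'_univ v x
      show a * u x + b * v x + c ≤ _
      nlinarith)
    (fun x => by
      have h1 := inf'_univ_le u x; have h2 := inf'_univ_le v x
      show _ ≤ a * u x + b * v x + c
      nlinarith)
  unfold spanSN at h ⊢
  nlinarith [h]

end auxspan

lemma sigma'_le_add {S A : Type*} [Fintype S] [Nonempty S]
    (P : S → A → Set (S → ℝ)) (hne : ∀ s a, (P s a).Nonempty)
    (hsub : ∀ s a, P s a ⊆ stdSimplex ℝ S)
    {h h' : S → ℝ} {M : ℝ} (hM : ∀ s', h s' - h' s' ≤ M) (s : S) (a : A) :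
    sigma' P h s a ≤ sigma' P h' s a + M := by
  have hbdd : BddBelow {x : ℝ | ∃ p ∈ P s a, x = ∑ s', p s' * h s'} := by
    refine ⟨Finset.univ.inf' Finset.univ_nonempty h, ?_⟩
    rintro x ⟨p, hp, rfl⟩
    obtain ⟨hp0, hp1⟩ := hsub s a hp
    calc Finset.univ.inf' Finset.univ_nonempty h
        = ∑ s', p s' * Finset.univ.inf' Finset.univ_nonempty h := by
          rw [← Finset.sum_mul, hp1, one_mul]
      _ ≤ ∑ s', p s' * h s' :=
          Finset.sum_le_sum fun s' _ =>
            mul_le_mul_of_nonneg_left (Finset.inf'_le _ (Finset.mem_univ s')) (hp0 s')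
  have hYne : {x : ℝ | ∃ p ∈ P s a, x = ∑ s', p s' * h' s'}.Nonempty := by
    obtain ⟨p, hp⟩ := hne s a; exact ⟨_, p, hp, rfl⟩
  rw [sigma', sigma', ← sub_le_iff_le_add]
  apply le_csInf hYne
  rintro y ⟨p, hp, rfl⟩
  rw [sub_le_iff_le_add]
  obtain ⟨hp0, hp1⟩ := hsub s a hp
  calc sInf {x : ℝ | ∃ p ∈ P s a, x = ∑ s', p s' * h s'}
      ≤ ∑ s', p s' * h s' := csInf_le hbdd ⟨p, hp, rfl⟩
    _ ≤ ∑ s', (p s' * h' s' + p s' * M) :=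
        Finset.sum_le_sum fun s' _ => by nlinarith [hM s', hp0 s']
    _ = (∑ s', p s' * h' s') + M := by
        rw [Finset.sum_add_distrib, ← Finset.sum_mul, hp1, one_mul]

lemma bellman_nonexp {S A : Type*} [Fintype S] [Fintype A] [Nonempty S] [Nonempty A]
    (P : S → A → Set (S → ℝ)) (hne : ∀ s a, (P s a).Nonempty)
    (hsub : ∀ s a, P s a ⊆ stdSimplex ℝ S) (r : S → A → ℝ) (U V : S × A → ℝ) :
    spanSN (fun x => bellman P r U x - bellman P r V x)
      ≤ spanSN (fun x => U x - V x) := by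
  set M := Finset.univ.sup' Finset.univ_nonempty (fun x : S × A => U x - V x) with hM
  set m := Finset.univ.inf' Finset.univ_nonempty (fun x : S × A => U x - V x) with hm
  set HU : S → ℝ := fun s' => Finset.univ.sup' Finset.univ_nonempty fun a' => U (s', a')
  set HV : S → ℝ := fun s' => Finset.univ.sup' Finset.univ_nonempty fun a' => V (s', a')
  have hup : ∀ s', HU s' - HV s' ≤ M := by
    intro s'
    rw [sub_le_iff_le_add]
    apply Finset.sup'_le
    intro a' _
    have h1 := le_sup'_univ (fun x : S × A => U x - V x) (s', a')
    have h2 := le_sup'_univ (fun a' => V (s', a')) a'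
    calc U (s', a') ≤ V (s', a') + M := by linarith
      _ ≤ M + HV s' := by linarith
  have hlo : ∀ s', HV s' - HU s' ≤ -m := by
    intro s'
    rw [sub_le_iff_le_add]
    apply Finset.sup'_le
    intro a' _
    have h1 := inf'_univ_le (fun x : S × A => U x - V x) (s', a')
    have h2 := le_sup'_univ (fun a' => U (s', a')) a'
    calc V (s', a') ≤ U (s', a') + -m := by linarith
      _ ≤ -m + HU s' := by linarith
  have hbound : spanSN (fun x => bellman P r U x - bellman P r V x) ≤ M - m := by
    apply spanSN_le_of_bounds
    · rintro ⟨s, a⟩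
      have := sigma'_le_add P hne hsub hup s a
      show r s a + sigma' P HU s a - (r s a + sigma' P HV s a) ≤ M
      linarith
    · rintro ⟨s, a⟩
      have := sigma'_le_add P hne hsub hlo s a
      show m ≤ r s a + sigma' P HU s a - (r s a + sigma' P HV s a)
      linarith
  exact hbound

set_option maxHeartbeats 1600000 in
/-- Paper's Theorem 4 (exact Robust Halpern Iteration): the Bellman residual span
decays like `8 Sp(Q⁰ − Q*)/(k+2)`, hence converges to `0`. -/
theorem stmt19 {S A : Type*} [Fintype S] [Fintype A] [Nonempty S] [Nonempty A]
    (P : S → A → Set (S → ℝ))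
    (hne : ∀ s a, (P s a).Nonempty)
    (hsub : ∀ s a, P s a ⊆ stdSimplex ℝ S)
    (r : S → A → ℝ)
    (Qstar : S × A → ℝ) (gstar : ℝ)
    (hstar : bellman P r Qstar = Qstar + gstar • (1 : S × A → ℝ))
    (Q : ℕ → (S × A → ℝ))
    (hrec : ∀ k : ℕ,
      Q (k + 1) = (2 / ((k : ℝ) + 3)) • Q 0 +
        (((k : ℝ) + 1) / ((k : ℝ) + 3)) • bellman P r (Q k)) :
    (∀ k : ℕ, spanSN (bellman P r (Q k) - Q k) ≤
        8 * spanSN (Q 0 - Qstar) / ((k : ℝ) + 2)) ∧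
    Filter.Tendsto (fun k => spanSN (bellman P r (Q k) - Q k))
      Filter.atTop (nhds 0) := by
  obtain ⟨T, hT⟩ : ∃ T, T = bellman P r := ⟨_, rfl⟩
  rw [← hT] at hstar hrec
  simp only [← hT]
  have hTstar : ∀ x, T Qstar x = Qstar x + gstar := by
    intro x
    have := congrFun hstar x
    simpa using this
  have hTrec : ∀ k x, Q (k + 1) x
      = (2 / ((k : ℝ) + 3)) * Q 0 x + (((k : ℝ) + 1) / ((k : ℝ) + 3)) * T (Q k) x := by
    intro k x
    have := congrFun (hrec k) x
    simpa [smul_eq_mul] using this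
  obtain ⟨D, hDdef⟩ : ∃ D, D = spanSN (Q 0 - Qstar) := ⟨_, rfl⟩
  rw [← hDdef]
  have hsubfun : (fun x => Q 0 x - Qstar x) = Q 0 - Qstar := by
    funext x; simp [Pi.sub_apply]
  have hDfun : spanSN (fun x => Q 0 x - Qstar x) = D := by rw [hDdef, hsubfun]
  have hD : 0 ≤ D := hDdef ▸ spanSN_nonneg _
  have hnonexp : ∀ U V : S × A → ℝ,
      spanSN (fun x => T U x - T V x) ≤ spanSN (fun x => U x - V x) := by
    rw [hT]; exact fun U V => bellman_nonexp P hne hsub r U V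
  have hDneg : spanSN (fun x => -(Q 0 x - Qstar x)) = D := by
    rw [spanSN_neg (fun x => Q 0 x - Qstar x)]
    exact hDfun
  -- Step A: iterates stay within span-distance D of Qstar.
  have hA : ∀ k, spanSN (fun x => Q k x - Qstar x) ≤ D := by
    intro k
    induction k with
    | zero => rw [hDfun]
    | succ k ih =>
      have hk3 : (0:ℝ) < (k : ℝ) + 3 := by positivity
      have hid : (fun x => Q (k+1) x - Qstar x)
          = fun x => (2/((k:ℝ)+3)) * (Q 0 x - Qstar x)
              + (((k:ℝ)+1)/((k:ℝ)+3)) * (T (Q k) x - T Qstar x)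
              + (((k:ℝ)+1)/((k:ℝ)+3)) * gstar := by
        funext x
        rw [hTrec k x, hTstar x]
        field_simp
        ring
      rw [hid]
      have hc := spanSN_combo (a := 2/((k:ℝ)+3)) (b := ((k:ℝ)+1)/((k:ℝ)+3))
        (c := (((k:ℝ)+1)/((k:ℝ)+3)) * gstar) (by positivity) (by positivity)
        (fun x => Q 0 x - Qstar x) (fun x => T (Q k) x - T Qstar x)
      rw [hDfun] at hc
      have hne' := le_trans (hnonexp (Q k) Qstar) ih
      have hsum : 2/((k:ℝ)+3) + ((k:ℝ)+1)/((k:ℝ)+3) = 1 := by field_simp; ring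
      have hb : (0:ℝ) ≤ ((k:ℝ)+1)/((k:ℝ)+3) := by positivity
      have ha : (0:ℝ) ≤ 2/((k:ℝ)+3) := by positivity
      nlinarith [spanSN_nonneg (fun x => T (Q k) x - T Qstar x)]
  -- span distance from T (Q j) to Q 0 is at most 2 D.
  have hTQ0 : ∀ j, spanSN (fun x => T (Q j) x - Q 0 x) ≤ 2 * D := by
    intro j
    have hid : (fun x => T (Q j) x - Q 0 x)
        = fun x => 1 * (T (Q j) x - T Qstar x) + 1 * (-(Q 0 x - Qstar x)) + gstar := by
      funext x
      rw [hTstar x]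
      ring
    rw [hid]
    have hc := spanSN_combo (a := (1:ℝ)) (b := (1:ℝ)) (c := gstar)
      zero_le_one zero_le_one
      (fun x => T (Q j) x - T Qstar x) (fun x => -(Q 0 x - Qstar x))
    rw [hDneg] at hc
    have hne' := le_trans (hnonexp (Q j) Qstar) (hA j)
    linarith
  -- Step B: consecutive differences decay like 4 D / (k+3).
  have hB : ∀ k, spanSN (fun x => Q (k+1) x - Q k x) ≤ 4 * D / ((k:ℝ)+3) := by
    intro k
    induction k with
    | zero =>
      have hid : (fun x => Q 1 x - Q 0 x)
          = fun x => (1/3) * (T (Q 0) x - T Qstar x)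
              + (1/3) * (-(Q 0 x - Qstar x)) + (1/3) * gstar := by
        funext x
        rw [hTrec 0 x, hTstar x]
        norm_num
        ring
      rw [hid]
      have hc := spanSN_combo (a := (1:ℝ)/3) (b := (1:ℝ)/3) (c := (1/3) * gstar)
        (by norm_num) (by norm_num)
        (fun x => T (Q 0) x - T Qstar x) (fun x => -(Q 0 x - Qstar x))
      rw [hDneg] at hc
      have hne' := le_trans (hnonexp (Q 0) Qstar) (hA 0)
      have : ((0:ℕ):ℝ) + 3 = 3 := by norm_num
      rw [this]
      linarith
    | succ k ih =>
      have hk3 : (0:ℝ) < (k : ℝ) + 3 := by positivity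
      have hk4 : (0:ℝ) < (k : ℝ) + 4 := by positivity
      have hid : (fun x => Q (k+2) x - Q (k+1) x)
          = fun x => (2/(((k:ℝ)+3)*((k:ℝ)+4))) * (T (Q k) x - Q 0 x)
              + (((k:ℝ)+2)/((k:ℝ)+4)) * (T (Q (k+1)) x - T (Q k) x) + 0 := by
        funext x
        have h1 := hTrec (k+1) x
        have h2 := hTrec k x
        push_cast at h1
        rw [h1, h2]
        field_simp
        ring
      rw [hid]
      have hc := spanSN_combo (a := 2/(((k:ℝ)+3)*((k:ℝ)+4))) (b := ((k:ℝ)+2)/((k:ℝ)+4))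
        (c := (0:ℝ)) (by positivity) (by positivity)
        (fun x => T (Q k) x - Q 0 x) (fun x => T (Q (k+1)) x - T (Q k) x)
      have hne' := le_trans (hnonexp (Q (k+1)) (Q k)) ih
      have h2D := hTQ0 k
      have hgoal : 2/(((k:ℝ)+3)*((k:ℝ)+4)) * (2*D)
          + ((k:ℝ)+2)/((k:ℝ)+4) * (4 * D / ((k:ℝ)+3)) = 4 * D / (((k:ℝ)+1)+3) := by
        field_simp
        ring
      push_cast
      have hb2 : (0:ℝ) ≤ ((k:ℝ)+2)/((k:ℝ)+4) := by positivity
      have ha2 : (0:ℝ) ≤ 2/(((k:ℝ)+3)*((k:ℝ)+4)) := by positivity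
      nlinarith [spanSN_nonneg (fun x => T (Q (k+1)) x - T (Q k) x),
        spanSN_nonneg (fun x => T (Q k) x - Q 0 x)]
  -- Step C: residual bound.
  have hC : ∀ k : ℕ, spanSN (T (Q k) - Q k) ≤ 8 * D / ((k : ℝ) + 2) := by
    intro k
    have hfun : (T (Q k) - Q k) = fun x => T (Q k) x - Q k x := by
      funext x; rfl
    rw [hfun]
    cases k with
    | zero =>
      have := hTQ0 0
      have h2 : ((0:ℕ):ℝ) + 2 = 2 := by norm_num
      rw [h2]
      linarith
    | succ k =>
      have hk3 : (0:ℝ) < (k : ℝ) + 3 := by positivity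
      have hid : (fun x => T (Q (k+1)) x - Q (k+1) x)
          = fun x => (2/((k:ℝ)+3)) * (T (Q (k+1)) x - Q 0 x)
              + (((k:ℝ)+1)/((k:ℝ)+3)) * (T (Q (k+1)) x - T (Q k) x) + 0 := by
        funext x
        rw [hTrec k x]
        field_simp
        ring
      rw [hid]
      have hc := spanSN_combo (a := 2/((k:ℝ)+3)) (b := ((k:ℝ)+1)/((k:ℝ)+3))
        (c := (0:ℝ)) (by positivity) (by positivity)
        (fun x => T (Q (k+1)) x - Q 0 x) (fun x => T (Q (k+1)) x - T (Q k) x)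
      have h2D := hTQ0 (k+1)
      have hne' := le_trans (hnonexp (Q (k+1)) (Q k)) (hB k)
      have hb2 : (0:ℝ) ≤ ((k:ℝ)+1)/((k:ℝ)+3) := by positivity
      have ha2 : (0:ℝ) ≤ 2/((k:ℝ)+3) := by positivity
      have hfrac : ((k:ℝ)+1)/((k:ℝ)+3) ≤ 1 := by
        rw [div_le_one hk3]; linarith
      push_cast
      have hrhs : 2/((k:ℝ)+3) * (2*D) + ((k:ℝ)+1)/((k:ℝ)+3) * (4 * D / ((k:ℝ)+3))
          ≤ 8 * D / ((k:ℝ)+1+2) := by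
        have h1 : ((k:ℝ)+1)/((k:ℝ)+3) * (4 * D / ((k:ℝ)+3)) ≤ 4 * D / ((k:ℝ)+3) := by
          have h4 : 0 ≤ 4 * D / ((k:ℝ)+3) := by positivity
          nlinarith
        have h2 : 2/((k:ℝ)+3) * (2*D) = 4 * D / ((k:ℝ)+3) := by ring
        have h3 : (4:ℝ) * D / ((k:ℝ)+3) + 4 * D / ((k:ℝ)+3) = 8 * D / ((k:ℝ)+1+2) := by
          ring
        linarith
      have m1 : 2/((k:ℝ)+3) * spanSN (fun x => T (Q (k+1)) x - Q 0 x)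
          ≤ 2/((k:ℝ)+3) * (2*D) := mul_le_mul_of_nonneg_left h2D ha2
      have m2 : ((k:ℝ)+1)/((k:ℝ)+3) * spanSN (fun x => T (Q (k+1)) x - T (Q k) x)
          ≤ ((k:ℝ)+1)/((k:ℝ)+3) * (4*D/((k:ℝ)+3)) := mul_le_mul_of_nonneg_left hne' hb2
      linarith [hc, hrhs]
  refine ⟨hC, ?_⟩
  have h1 : Filter.Tendsto (fun k : ℕ => (k:ℝ) + 2) Filter.atTop Filter.atTop :=
    Filter.tendsto_atTop_add_const_right _ _ tendsto_natCast_atTop_atTop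
  have h2 : Filter.Tendsto (fun k : ℕ => 8 * D / ((k:ℝ) + 2)) Filter.atTop (nhds 0) :=
    Filter.Tendsto.div_atTop tendsto_const_nhds h1
  exact squeeze_zero (fun k => spanSN_nonneg _) hC h2
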